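/- arXiv:2511.14162 — 2 statements merged into one kernel-verified Lean document; each statement's English description precedes it below -/
import Mathlib

section
/- Given the bounds L_LGA ≤ (1/2)(L* + L_split) with L_split = n·c + n·γ·c (writing Σ_u s(u)λ(u) = n·γ·c for γ = (1/(n·c))·Σ_u s(u)λ(u)), and L* ≥ c + n·γ·c, the ratio bound L_LGA ≤ (1 + (n-1)/(2 + 2γn))·L* holds, and as n → ∞ this bound converges to (1 + 1/(2γ))·L*. -/
/-!
Since `L* ≥ c(1 + γn)`, the split cost `nc(1 + γ)` is at most `n(1 + γ)/(1 + γn) · L*`, so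
`L^LGA ≤ (1 + n(1 + γ)/(1 + γn))/2 · L*`, and this coefficient equals `1 + (n - 1)/(2 + 2γn)`.
Substituting `y = 1/n`, the coefficient is `1 + (1 - y)/(2y + 2γ)`, continuous at `y = 0`.
-/

open Filter Topology

theorem one_add_sub_one_div_eq {γ x : ℝ} (h : 1 + γ * x ≠ 0) :
    1 + (x - 1) / (2 + 2 * γ * x) = (1 + x * (1 + γ) / (1 + γ * x)) / 2 := by
  -- `field_simp` looks for the side condition in its normal form `1 + x * γ`
  have h' : 1 + x * γ ≠ 0 := by rwa [mul_comm]
  field_simp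
  ring

theorem le_one_add_sub_one_div_mul {c γ x L L' : ℝ} (hγ : 0 ≤ γ) (hx : 0 ≤ x)
    (hL : c * (1 + γ * x) ≤ L) (hL' : L' ≤ (L + x * c * (1 + γ)) / 2) :
    L' ≤ (1 + (x - 1) / (2 + 2 * γ * x)) * L := by
  have hpos : 0 < 1 + γ * x := by positivity
  have hsplit : x * c * (1 + γ) ≤ x * (1 + γ) / (1 + γ * x) * L :=
    calc x * c * (1 + γ) = x * (1 + γ) / (1 + γ * x) * (c * (1 + γ * x)) := by
          field_simp
      _ ≤ x * (1 + γ) / (1 + γ * x) * L := by gcongr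
  calc L' ≤ (L + x * c * (1 + γ)) / 2 := hL'
    _ ≤ (L + x * (1 + γ) / (1 + γ * x) * L) / 2 := by linarith
    _ = (1 + (x - 1) / (2 + 2 * γ * x)) * L := by
          rw [one_add_sub_one_div_eq hpos.ne']
          ring

theorem tendsto_one_add_sub_one_div_atTop {γ : ℝ} (hγ : γ ≠ 0) :
    Tendsto (fun x : ℝ => 1 + (x - 1) / (2 + 2 * γ * x)) atTop (𝓝 (1 + 1 / (2 * γ))) := by
  have hcont : ContinuousAt (fun y : ℝ => 1 + (1 - y) / (2 * y + 2 * γ)) 0 :=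
    continuousAt_const.add <| (continuousAt_const.sub continuousAt_id).div
      (by fun_prop) (by simpa using hγ)
  have hlim := hcont.tendsto.comp tendsto_inv_atTop_zero
  simp only [Function.comp_def, sub_zero, mul_zero, zero_add] at hlim
  refine hlim.congr' ?_
  filter_upwards [eventually_gt_atTop 0] with x hx
  field_simp

theorem stmt8_general (c γ : ℝ) (hγ : 0 < γ)
    (Lstar Llga : ℕ → ℝ)
    (hstar : ∀ n : ℕ, 1 ≤ n → c * (1 + γ * n) ≤ Lstar n)
    (hlga : ∀ n : ℕ, 1 ≤ n → Llga n ≤ (Lstar n + (n : ℝ) * c * (1 + γ)) / 2) :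
    (∀ n : ℕ, 1 ≤ n →
        Llga n ≤ (1 + ((n : ℝ) - 1) / (2 + 2 * γ * n)) * Lstar n) ∧
    Filter.Tendsto (fun n : ℕ => 1 + ((n : ℝ) - 1) / (2 + 2 * γ * n))
      Filter.atTop (nhds (1 + 1 / (2 * γ))) :=
  ⟨fun n hn => le_one_add_sub_one_div_mul hγ.le n.cast_nonneg (hstar n hn) (hlga n hn),
    (tendsto_one_add_sub_one_div_atTop hγ.ne').comp tendsto_natCast_atTop_atTop⟩

/-- Given `L*_n ≥ c(1 + γn)` and `L^LGA_n ≤ (L*_n + n·c·(1+γ))/2`, the ratio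
bound `L^LGA_n ≤ (1 + (n-1)/(2 + 2γn))·L*_n` holds for every `n ≥ 1`, and the
coefficient `1 + (n-1)/(2 + 2γn)` tends to `1 + 1/(2γ)` as `n → ∞`. -/
theorem stmt8 (c γ : ℝ) (hc : 0 < c) (hγ : 0 < γ)
    (Lstar Llga : ℕ → ℝ)
    (hstar : ∀ n : ℕ, 1 ≤ n → c * (1 + γ * n) ≤ Lstar n)
    (hlga : ∀ n : ℕ, 1 ≤ n → Llga n ≤ (Lstar n + (n : ℝ) * c * (1 + γ)) / 2) :
    (∀ n : ℕ, 1 ≤ n →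
        Llga n ≤ (1 + ((n : ℝ) - 1) / (2 + 2 * γ * n)) * Lstar n) ∧
    Filter.Tendsto (fun n : ℕ => 1 + ((n : ℝ) - 1) / (2 + 2 * γ * n))
      Filter.atTop (nhds (1 + 1 / (2 * γ))) :=
  stmt8_general c γ hγ Lstar Llga hstar hlga
end

section
/- Every active variable's pod is connected to an accessed variable's pod in the prior pod graph: combining locality and pod-lifting, if variable u is connected in the current object graph G to some accessed variable v ∈ V_C, then pod(u) is connected to pod(v') in the prior pod graph G⁰_p for some accessed variable v' ∈ V_C. -/
/-!
Follow a path in the current graph from `u` to an accessed variable, backwards from its end.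
An edge that was already in the prior graph lifts to the pod graph (its endpoints share a pod or
span a pod edge), so the pod of the earlier endpoint reaches the same accessed pod. An edge added by
the execution is anchored by locality: its endpoints are connected in the prior graph to accessed
variables, and that prior connection lifts to the pod graph.
-/

namespace SimpleGraph

variable {V W : Type*} {G : SimpleGraph V} {H : SimpleGraph W}

theorem Reachable.lift (f : V → W) (hf : ∀ a b, G.Adj a b → H.Reachable (f a) (f b)) {a b : V}
    (h : G.Reachable a b) : H.Reachable (f a) (f b) := by
  rw [reachable_eq_reflTransGen] at hf h ⊢
  exact Relation.ReflTransGen.lift' f hf _ _ h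

theorem Reachable.mem_of_adj_closed {S : Set V} (hS : ∀ x y, G.Adj x y → y ∈ S → x ∈ S)
    {u v : V} (h : G.Reachable u v) (hv : v ∈ S) : u ∈ S := by
  rw [reachable_iff_reflTransGen] at h
  induction h using Relation.ReflTransGen.head_induction_on with
  | refl => exact hv
  | head hxy _ ih => exact hS _ _ hxy ih

end SimpleGraph

open SimpleGraph

section PodGraph

variable {V P : Type*}

def podGraph (E0 : V → V → Prop) (pod : V → P) : SimpleGraph P :=
  fromRel fun p q => ∃ a b : V, pod a = p ∧ pod b = q ∧ E0 a b

theorem podGraph_reachable_pod {E0 : V → V → Prop} {pod : V → P} {a b : V}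
    (h : (fromRel E0).Reachable a b) : (podGraph E0 pod).Reachable (pod a) (pod b) :=
  h.lift pod fun a b (hab : (fromRel E0).Adj a b) => by
    obtain ⟨-, hab⟩ := hab
    by_cases hpod : pod a = pod b
    · rw [hpod]
    · exact Adj.reachable
        ⟨hpod, hab.imp (fun h => ⟨a, b, rfl, rfl, h⟩) (fun h => ⟨b, a, rfl, rfl, h⟩)⟩

theorem reachable_or_anchored_of_adj {E0 Eadd E : V → V → Prop} {VC : Set V}
    (hE : ∀ a b, E a b → E0 a b ∨ Eadd a b)
    (hloc : ∀ a b, Eadd a b →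
      (∃ v ∈ VC, (fromRel E0).Reachable a v) ∧ (∃ v ∈ VC, (fromRel E0).Reachable b v))
    {x y : V} (hxy : (fromRel E).Adj x y) :
    (fromRel E0).Reachable x y ∨ ∃ w ∈ VC, (fromRel E0).Reachable x w := by
  obtain ⟨hne, hxy | hyx⟩ := hxy
  · rcases hE x y hxy with h0 | hadd
    · exact Or.inl (Adj.reachable ⟨hne, Or.inl h0⟩)
    · exact Or.inr (hloc x y hadd).1
  · rcases hE y x hyx with h0 | hadd
    · exact Or.inl (Adj.reachable ⟨hne, Or.inr h0⟩)
    · exact Or.inr (hloc y x hadd).2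

end PodGraph

/-- Every active variable's pod is connected to an accessed variable's pod in
the prior pod graph: under execution locality (every added edge has both
endpoints connected in the prior graph `E0` to some accessed variable in `VC`),
if `u` is connected in the post-execution graph `E` to some accessed variable,
then `pod u` is connected in the prior pod graph to the pod of some accessed
variable. -/
theorem stmt17 {V P : Type*} (E0 Eadd E : V → V → Prop) (VC : Set V)
    (pod : V → P)
    (hE : ∀ a b, E a b → E0 a b ∨ Eadd a b)
    (hloc : ∀ a b, Eadd a b →
      (∃ v ∈ VC, (SimpleGraph.fromRel E0).Reachable a v) ∧
      (∃ v ∈ VC, (SimpleGraph.fromRel E0).Reachable b v))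
    (u : V)
    (hactive : ∃ v ∈ VC, (SimpleGraph.fromRel E).Reachable u v) :
    ∃ v' ∈ VC,
      (SimpleGraph.fromRel
          (fun p q => ∃ a b : V, pod a = p ∧ pod b = q ∧ E0 a b)).Reachable
        (pod u) (pod v') := by
  obtain ⟨v, hv, huv⟩ := hactive
  refine huv.mem_of_adj_closed
    (S := {x | ∃ v' ∈ VC, (podGraph E0 pod).Reachable (pod x) (pod v')}) ?_ ⟨v, hv, .refl _⟩
  rintro x y hxy ⟨v', hv', hyv'⟩
  rcases reachable_or_anchored_of_adj hE hloc hxy with hxy₀ | ⟨w, hw, hxw⟩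
  · exact ⟨v', hv', (podGraph_reachable_pod hxy₀).trans hyv'⟩
  · exact ⟨w, hw, podGraph_reachable_pod hxw⟩
end
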